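/- arXiv:2411.14559 — 3 statements merged into one kernel-verified Lean document; each statement's English description precedes it below -/
import Mathlib

section
/- Let E and F be GTESs over a signature Σ, with W = ST(E ∪ F). Then the union of the ↔*_E-classes of the elements of W equals T_Σ if and only if the GTRS R⟨E,F⟩ is total. -/
inductive GTerm (S : Type) (ar : S → ℕ) : Type
  | node (σ : S) (args : Fin (ar σ) → GTerm S ar) : GTerm S ar

/-- The congruence on the ground term algebra generated by a set of equations `E`:
the smallest equivalence relation containing `E` and compatible with all operations. -/
inductive EqCong {S : Type} {ar : S → ℕ} (E : Set (GTerm S ar × GTerm S ar)) :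
    GTerm S ar → GTerm S ar → Prop
  | base {s t : GTerm S ar} : (s, t) ∈ E → EqCong E s t
  | refl (t : GTerm S ar) : EqCong E t t
  | symm {s t : GTerm S ar} : EqCong E s t → EqCong E t s
  | trans {s t u : GTerm S ar} : EqCong E s t → EqCong E t u → EqCong E s u
  | lift {σ : S} {f g : Fin (ar σ) → GTerm S ar} :
      (∀ i, EqCong E (f i) (g i)) → EqCong E (GTerm.node σ f) (GTerm.node σ g)

/-- A congruence on the ground term algebra: an equivalence relation compatible
with all operations. -/
def IsTermCongruence {S : Type} {ar : S → ℕ} (r : GTerm S ar → GTerm S ar → Prop) : Prop :=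
  Equivalence r ∧
    ∀ (σ : S) (f g : Fin (ar σ) → GTerm S ar),
      (∀ i, r (f i) (g i)) → r (GTerm.node σ f) (GTerm.node σ g)

/-- `Subterm s t` : `s` is a subterm of `t`. -/
inductive Subterm {S : Type} {ar : S → ℕ} : GTerm S ar → GTerm S ar → Prop
  | refl (t : GTerm S ar) : Subterm t t
  | node {s : GTerm S ar} {σ : S} {f : Fin (ar σ) → GTerm S ar} (i : Fin (ar σ)) :
      Subterm s (f i) → Subterm s (GTerm.node σ f)

/-- `ST E` : the set of all subterms of sides of equations of `E`. -/
def STSet {S : Type} {ar : S → ℕ} (E : Set (GTerm S ar × GTerm S ar)) : Set (GTerm S ar) :=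
  {t | ∃ p ∈ E, Subterm t p.1 ∨ Subterm t p.2}

/-- The `Θ⟨G⟩`-class of `t` inside `W`. -/
def thCls {S : Type} {ar : S → ℕ} (G : Set (GTerm S ar × GTerm S ar))
    (W : Set (GTerm S ar)) (t : GTerm S ar) : Set (GTerm S ar) :=
  {u | u ∈ W ∧ EqCong G t u}

/-- `Θ⟨G⟩` as a set of pairs: the restriction of the generated congruence to `W × W`. -/
def Theta {S : Type} {ar : S → ℕ} (G : Set (GTerm S ar × GTerm S ar))
    (W : Set (GTerm S ar)) : Set (GTerm S ar × GTerm S ar) :=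
  {p | p.1 ∈ W ∧ p.2 ∈ W ∧ EqCong G p.1 p.2}

/-- `C⟨G⟩` : the set of `Θ⟨G⟩`-classes of elements of `W`, viewed as new constants. -/
def CCl {S : Type} {ar : S → ℕ} (G : Set (GTerm S ar × GTerm S ar))
    (W : Set (GTerm S ar)) : Set (Set (GTerm S ar)) :=
  {A | ∃ t ∈ W, A = thCls G W t}

/-- Terms over the signature extended with a type `C` of new constants. -/
inductive XTerm (S : Type) (ar : S → ℕ) (C : Type) : Type
  | const (c : C) : XTerm S ar C
  | node (σ : S) (args : Fin (ar σ) → XTerm S ar C) : XTerm S ar C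

abbrev XRule (S : Type) (ar : S → ℕ) (C : Type) : Type :=
  XTerm S ar C × XTerm S ar C

/-- Embedding of ground terms over `Σ` into the extended terms. -/
def GTerm.toX {S : Type} {ar : S → ℕ} {C : Type} : GTerm S ar → XTerm S ar C
  | .node σ f => .node σ (fun i => (f i).toX)

/-- The GTRS `R⟨G⟩` (relative to the subterm set `W`): its rules are exactly
`σ(t₁/Θ⟨G⟩, …, t_m/Θ⟨G⟩) → σ(t₁,…,t_m)/Θ⟨G⟩` for `σ(t₁,…,t_m) ∈ W`. -/
def RRsys {S : Type} {ar : S → ℕ} (G : Set (GTerm S ar × GTerm S ar))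
    (W : Set (GTerm S ar)) : Set (XRule S ar (Set (GTerm S ar))) :=
  {r | ∃ (σ : S) (ts : Fin (ar σ) → GTerm S ar),
      GTerm.node σ ts ∈ W ∧
      r = (XTerm.node σ (fun i => XTerm.const (thCls G W (ts i))),
           XTerm.const (thCls G W (GTerm.node σ ts)))}

/-- One-step rewriting by a GTRS `R`. -/
inductive Rew {S : Type} {ar : S → ℕ} {C : Type} (R : Set (XRule S ar C)) :
    XTerm S ar C → XTerm S ar C → Prop
  | rule {l r : XTerm S ar C} : (l, r) ∈ R → Rew R l r
  | node {σ : S} {f g : Fin (ar σ) → XTerm S ar C} (i : Fin (ar σ)) :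
      Rew R (f i) (g i) → (∀ j, j ≠ i → f j = g j) →
      Rew R (XTerm.node σ f) (XTerm.node σ g)

/-- `→*_R` : reflexive–transitive closure of one-step rewriting. -/
def RewStar {S : Type} {ar : S → ℕ} {C : Type} (R : Set (XRule S ar C)) :
    XTerm S ar C → XTerm S ar C → Prop :=
  Relation.ReflTransGen (Rew R)

/-- A GTRS is total (w.r.t. a set `Cst` of constants) if every `σ(a₁,…,a_m)` with
`a₁,…,a_m ∈ Cst` is the left-hand side of some rule. -/
def TotalR {S : Type} {ar : S → ℕ} (R : Set (XRule S ar (Set (GTerm S ar))))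
    (Cst : Set (Set (GTerm S ar))) : Prop :=
  ∀ (σ : S) (av : Fin (ar σ) → Set (GTerm S ar)), (∀ i, av i ∈ Cst) →
    ∃ rhs, (XTerm.node σ (fun i => XTerm.const (av i)), rhs) ∈ R

/-- An extended term containing no new constants, i.e. a ground term over `Σ`. -/
def IsGroundX {S : Type} {ar : S → ℕ} {C : Type} (t : XTerm S ar C) : Prop :=
  ∃ s : GTerm S ar, GTerm.toX s = t

/-- `ProperExt b t` : `t = δ[b]` for some one-hole context `δ` over `Σ`
different from the hole itself. -/
inductive ProperExt {S : Type} {ar : S → ℕ} {C : Type} (b : XTerm S ar C) :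
    XTerm S ar C → Prop
  | base {σ : S} {f : Fin (ar σ) → XTerm S ar C} (i : Fin (ar σ)) :
      f i = b → (∀ j, j ≠ i → IsGroundX (f j)) → ProperExt b (XTerm.node σ f)
  | step {σ : S} {f : Fin (ar σ) → XTerm S ar C} (i : Fin (ar σ)) :
      ProperExt b (f i) → (∀ j, j ≠ i → IsGroundX (f j)) → ProperExt b (XTerm.node σ f)

/-- `R` reaches the constant `a` from a proper extension of the constant `b`. -/
def ReachesPE {S : Type} {ar : S → ℕ} (R : Set (XRule S ar (Set (GTerm S ar))))
    (a b : Set (GTerm S ar)) : Prop :=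
  ∃ t, ProperExt (XTerm.const b) t ∧ RewStar R t (XTerm.const a)

/-- The arc relation `A[E;F]` of the auxiliary directed graph: `(a,b)` is an arc iff some
rule `σ(a₁,…,a_m) → a` of `R` has `b = aᵢ` for some `i`. -/
def AuxArc {S : Type} {ar : S → ℕ} (R : Set (XRule S ar (Set (GTerm S ar))))
    (a b : Set (GTerm S ar)) : Prop :=
  ∃ (σ : S) (av : Fin (ar σ) → Set (GTerm S ar)) (i : Fin (ar σ)),
    (XTerm.node σ (fun j => XTerm.const (av j)), XTerm.const a) ∈ R ∧ av i = b

/-- `R1` keeps up with `Rall` writing the constant `a`. -/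
def KeepsUp {S : Type} {ar : S → ℕ}
    (R1 Rall : Set (XRule S ar (Set (GTerm S ar))))
    (C1 : Set (Set (GTerm S ar))) (a : Set (GTerm S ar)) : Prop :=
  ∀ (σ : S) (av : Fin (ar σ) → Set (GTerm S ar)),
    (XTerm.node σ (fun i => XTerm.const (av i)), XTerm.const a) ∈ Rall →
    ∀ bv : Fin (ar σ) → Set (GTerm S ar),
      (∀ i, bv i ∈ C1) → (∀ i, bv i ⊆ av i) →
      ∃ rhs, (XTerm.node σ (fun i => XTerm.const (bv i)), rhs) ∈ R1

/-- `R1` (with constant set `C1`) simulates `Rall` (with constant set `Call`) on `a`. -/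
def SimulatesOn {S : Type} {ar : S → ℕ}
    (R1 Rall : Set (XRule S ar (Set (GTerm S ar))))
    (C1 Call : Set (Set (GTerm S ar))) (a : Set (GTerm S ar)) : Prop :=
  a ∈ C1 ∧ ∀ b ∈ Call, ReachesPE Rall a b → KeepsUp R1 Rall C1 b

/-- `R⟨E,F⟩` and `R⟨F,E⟩` together simulate `R⟨E∪F,∅⟩`. -/
def TogetherSim {S : Type} {ar : S → ℕ}
    (E F : Set (GTerm S ar × GTerm S ar)) : Prop :=
  ∀ a ∈ CCl (E ∪ F) (STSet (E ∪ F)),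
    SimulatesOn (RRsys E (STSet (E ∪ F))) (RRsys (E ∪ F) (STSet (E ∪ F)))
      (CCl E (STSet (E ∪ F))) (CCl (E ∪ F) (STSet (E ∪ F))) a ∨
    SimulatesOn (RRsys F (STSet (E ∪ F))) (RRsys (E ∪ F) (STSet (E ∪ F)))
      (CCl F (STSet (E ∪ F))) (CCl (E ∪ F) (STSet (E ∪ F))) a


section CongruenceClosure

variable {S : Type} {ar : S → ℕ}

/-- Bottom-up evaluation relation: `NF G W t a` means the term `t` evaluates to the
`Θ`-class `a` by the rules of `R⟨G⟩` relative to `W`. -/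
inductive NF (G : Set (GTerm S ar × GTerm S ar)) (W : Set (GTerm S ar)) :
    GTerm S ar → Set (GTerm S ar) → Prop
  | intro {σ : S} (f ts : Fin (ar σ) → GTerm S ar) :
      GTerm.node σ ts ∈ W → (∀ i, NF G W (f i) (thCls G W (ts i))) →
      NF G W (GTerm.node σ f) (thCls G W (GTerm.node σ ts))

/-- Congruence-closure relation built from `NF`. -/
inductive CEq (G : Set (GTerm S ar × GTerm S ar)) (W : Set (GTerm S ar)) :
    GTerm S ar → GTerm S ar → Prop
  | cls {s t : GTerm S ar} {a : Set (GTerm S ar)} :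
      NF G W s a → NF G W t a → CEq G W s t
  | node {σ : S} {f g : Fin (ar σ) → GTerm S ar} :
      (∀ i, CEq G W (f i) (g i)) → CEq G W (GTerm.node σ f) (GTerm.node σ g)

theorem thCls_eq_of_eqCong {G : Set (GTerm S ar × GTerm S ar)} {W : Set (GTerm S ar)}
    {u v : GTerm S ar} (h : EqCong G u v) : thCls G W u = thCls G W v := by
  ext x
  exact ⟨fun hx => ⟨hx.1, (EqCong.symm h).trans hx.2⟩, fun hx => ⟨hx.1, h.trans hx.2⟩⟩

theorem eqCong_of_thCls_eq {G : Set (GTerm S ar × GTerm S ar)} {W : Set (GTerm S ar)}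
    {u v : GTerm S ar} (hv : v ∈ W) (h : thCls G W u = thCls G W v) : EqCong G u v := by
  have hmem : v ∈ thCls G W v := ⟨hv, EqCong.refl v⟩
  rw [← h] at hmem
  exact hmem.2

theorem Subterm.trans' {a b c : GTerm S ar} (h1 : Subterm a b) (h2 : Subterm b c) :
    Subterm a c := by
  induction h2 with
  | refl => exact h1
  | node i _ ih => exact Subterm.node i ih

theorem STSet_closed {G : Set (GTerm S ar × GTerm S ar)} {σ : S}
    {ts : Fin (ar σ) → GTerm S ar} (h : GTerm.node σ ts ∈ STSet G) (i : Fin (ar σ)) :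
    ts i ∈ STSet G := by
  obtain ⟨p, hp, hsub⟩ := h
  refine ⟨p, hp, ?_⟩
  have hst : Subterm (ts i) (GTerm.node σ ts) := Subterm.node i (Subterm.refl _)
  cases hsub with
  | inl h => exact Or.inl (hst.trans' h)
  | inr h => exact Or.inr (hst.trans' h)

variable {G : Set (GTerm S ar × GTerm S ar)} {W : Set (GTerm S ar)}

theorem nf_fun (hW : ∀ {σ : S} {ts : Fin (ar σ) → GTerm S ar},
      GTerm.node σ ts ∈ W → ∀ i, ts i ∈ W)
    {t : GTerm S ar} {a : Set (GTerm S ar)} (h1 : NF G W t a) :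
    ∀ b, NF G W t b → a = b := by
  induction h1 with
  | intro f ts hts hnf ih =>
    intro b h2
    cases h2 with
    | intro _ ts' hts' hnf' =>
      have heq : ∀ i, thCls G W (ts i) = thCls G W (ts' i) := fun i => ih i _ (hnf' i)
      exact thCls_eq_of_eqCong
        (EqCong.lift (fun i => eqCong_of_thCls_eq (hW hts' i) (heq i)))

theorem nf_of_mem (hW : ∀ {σ : S} {ts : Fin (ar σ) → GTerm S ar},
      GTerm.node σ ts ∈ W → ∀ i, ts i ∈ W)
    {w : GTerm S ar} (hw : w ∈ W) : NF G W w (thCls G W w) := by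
  induction w with
  | node σ f ih => exact NF.intro f f hw (fun i => ih i (hW hw i))

theorem nf_transfer (hW : ∀ {σ : S} {ts : Fin (ar σ) → GTerm S ar},
      GTerm.node σ ts ∈ W → ∀ i, ts i ∈ W)
    {s t : GTerm S ar} (h : CEq G W s t) :
    ∀ a, NF G W t a → NF G W s a := by
  induction h with
  | cls h1 h2 =>
    intro a ha
    rw [nf_fun hW h2 a ha] at h1
    exact h1
  | node hfg ih =>
    intro a ha
    cases ha with
    | intro _ ts hts hnf => exact NF.intro _ ts hts (fun i => ih i _ (hnf i))

theorem nf_inv {σ : S} {f : Fin (ar σ) → GTerm S ar} {a : Set (GTerm S ar)}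
    (h : NF G W (GTerm.node σ f) a) :
    ∃ ts, GTerm.node σ ts ∈ W ∧ (∀ i, NF G W (f i) (thCls G W (ts i))) ∧
      a = thCls G W (GTerm.node σ ts) := by
  cases h with
  | intro _ ts hts hnf => exact ⟨ts, hts, hnf, rfl⟩

theorem ceq_symm {s t : GTerm S ar} (h : CEq G W s t) : CEq G W t s := by
  induction h with
  | cls h1 h2 => exact CEq.cls h2 h1
  | node _ ih => exact CEq.node ih

theorem ceq_refl (t : GTerm S ar) : CEq G W t t := by
  induction t with
  | node σ f ih => exact CEq.node ih

theorem ceq_trans (hW : ∀ {σ : S} {ts : Fin (ar σ) → GTerm S ar},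
      GTerm.node σ ts ∈ W → ∀ i, ts i ∈ W)
    {s t : GTerm S ar} (h1 : CEq G W s t) :
    ∀ u, CEq G W t u → CEq G W s u := by
  induction h1 with
  | cls hs ht =>
    intro u h2
    exact CEq.cls hs (nf_transfer hW (ceq_symm h2) _ ht)
  | node hfg ih =>
    intro u h2
    cases h2 with
    | cls h2a h2b => exact CEq.cls (nf_transfer hW (CEq.node hfg) _ h2a) h2b
    | node hgh => exact CEq.node (fun i => ih i _ (hgh i))

theorem eqCong_to_ceq (hW : ∀ {σ : S} {ts : Fin (ar σ) → GTerm S ar},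
      GTerm.node σ ts ∈ W → ∀ i, ts i ∈ W)
    (hG : ∀ p ∈ G, p.1 ∈ W ∧ p.2 ∈ W)
    {s t : GTerm S ar} (h : EqCong G s t) : CEq G W s t := by
  induction h with
  | base hmem =>
    obtain ⟨h1, h2⟩ := hG _ hmem
    have hn1 := nf_of_mem (G := G) hW h1
    have hn2 := nf_of_mem (G := G) hW h2
    rw [← thCls_eq_of_eqCong (EqCong.base hmem)] at hn2
    exact CEq.cls hn1 hn2
  | refl t => exact ceq_refl t
  | symm _ ih => exact ceq_symm ih
  | trans _ _ ih1 ih2 => exact ceq_trans hW ih1 _ ih2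
  | lift _ ih => exact CEq.node ih

end CongruenceClosure

theorem stmt_5 {S : Type} [Fintype S] {ar : S → ℕ} (hconst : ∃ c : S, ar c = 0)
    (E F : Set (GTerm S ar × GTerm S ar)) (hEfin : E.Finite) (hFfin : F.Finite) :
    (⋃ t ∈ STSet (E ∪ F), {s | EqCong E t s}) = (Set.univ : Set (GTerm S ar)) ↔
    TotalR (RRsys E (STSet (E ∪ F))) (CCl E (STSet (E ∪ F))) := by
  set W := STSet (E ∪ F) with hWdef
  have hW : ∀ {σ : S} {ts : Fin (ar σ) → GTerm S ar},
      GTerm.node σ ts ∈ W → ∀ i, ts i ∈ W := fun hts i => STSet_closed hts i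
  have hG : ∀ p ∈ E, p.1 ∈ W ∧ p.2 ∈ W := fun p hp =>
    ⟨⟨p, Or.inl hp, Or.inl (Subterm.refl _)⟩, ⟨p, Or.inl hp, Or.inr (Subterm.refl _)⟩⟩
  constructor
  · intro hcov σ av hav
    choose ts htsW heq using hav
    have hsmem : GTerm.node σ ts ∈ ⋃ t ∈ W, {u | EqCong E t u} := by
      rw [hcov]; exact Set.mem_univ _
    simp only [Set.mem_iUnion, Set.mem_setOf_eq] at hsmem
    obtain ⟨u, hu, hcong⟩ := hsmem
    have hceq : CEq E W (GTerm.node σ ts) u := eqCong_to_ceq hW hG (EqCong.symm hcong)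
    have hnf : NF E W (GTerm.node σ ts) (thCls E W u) :=
      nf_transfer hW hceq _ (nf_of_mem hW hu)
    obtain ⟨ts', hts', hnf', -⟩ := nf_inv hnf
    · have hcls : ∀ i, av i = thCls E W (ts' i) := by
        intro i
        rw [heq i]
        exact nf_fun hW (nf_of_mem hW (htsW i)) _ (hnf' i)
      refine ⟨XTerm.const (thCls E W (GTerm.node σ ts')), σ, ts', hts', ?_⟩
      have hfun : (fun i => (XTerm.const (av i) : XTerm S ar (Set (GTerm S ar)))) =
          fun i => XTerm.const (thCls E W (ts' i)) := funext fun i => by rw [hcls i]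
      rw [hfun]
  · intro htot
    apply Set.eq_univ_of_forall
    intro x
    simp only [Set.mem_iUnion, Set.mem_setOf_eq]
    induction x with
    | node σ f ih =>
      choose u huW hucong using ih
      obtain ⟨rhs, hr⟩ := htot σ (fun i => thCls E W (u i)) (fun i => ⟨u i, huW i, rfl⟩)
      obtain ⟨σ', ts, htsW, heqp⟩ := hr
      injection heqp with h1 h2
      injection h1 with hσ hf
      subst hσ
      have hf' := eq_of_heq hf
      have hcls : ∀ i, thCls E W (u i) = thCls E W (ts i) := by
        intro i
        have := congrFun hf' i
        injection this
      have hcong : ∀ i, EqCong E (u i) (ts i) := fun i =>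
        eqCong_of_thCls_eq (hW htsW i) (hcls i)
      exact ⟨GTerm.node σ ts, htsW,
        EqCong.lift (fun i => (EqCong.symm (hcong i)).trans (hucong i))⟩
end

section
/- Let E and F be GTESs over a signature Σ such that the GTRS R⟨E,F⟩ is total, and let W = ST(E ∪ F). Then for every p ∈ W, the ↔*_{E∪F}-class of p equals the ↔*_E-class of p if and only if p/Θ⟨E∪F,∅⟩ = p/Θ⟨E,F⟩. -/
lemma EqCong.mono' {S : Type} {ar : S → ℕ} {E F : Set (GTerm S ar × GTerm S ar)}
    (h : E ⊆ F) {s t : GTerm S ar} (he : EqCong E s t) : EqCong F s t := by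
  induction he with
  | base h' => exact .base (h h')
  | refl t => exact .refl t
  | symm _ ih => exact ih.symm
  | trans _ _ ih1 ih2 => exact ih1.trans ih2
  | lift _ ih => exact .lift ih

lemma exists_rep {S : Type} {ar : S → ℕ} (E F : Set (GTerm S ar × GTerm S ar))
    (htot : TotalR (RRsys E (STSet (E ∪ F))) (CCl E (STSet (E ∪ F)))) :
    ∀ s : GTerm S ar, ∃ w ∈ STSet (E ∪ F), EqCong E s w := by
  intro s
  induction s with
  | node σ f ih =>
    choose w hw hcong using ih
    obtain ⟨rhs, hr⟩ := htot σ (fun i => thCls E (STSet (E ∪ F)) (w i))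
      (fun i => ⟨w i, hw i, rfl⟩)
    obtain ⟨σ', ts, hts, heq⟩ := hr
    have h1 : (XTerm.node σ (fun i => XTerm.const (thCls E (STSet (E ∪ F)) (w i)))
        : XTerm S ar (Set (GTerm S ar)))
        = XTerm.node σ' (fun i => XTerm.const (thCls E (STSet (E ∪ F)) (ts i))) :=
      congrArg Prod.fst heq
    injection h1 with hσ hf
    subst hσ
    have hf' := heq_iff_eq.mp hf
    have h2 : ∀ i, thCls E (STSet (E ∪ F)) (w i) = thCls E (STSet (E ∪ F)) (ts i) := by
      intro i
      have := congrFun hf' i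
      exact XTerm.const.inj this
    have h3 : ∀ i, EqCong E (f i) (ts i) := by
      intro i
      have hmem : w i ∈ thCls E (STSet (E ∪ F)) (ts i) := by
        rw [← h2 i]; exact ⟨hw i, EqCong.refl _⟩
      exact (hcong i).trans hmem.2.symm
    exact ⟨GTerm.node σ ts, hts, EqCong.lift h3⟩

theorem stmt_8 {S : Type} [Fintype S] {ar : S → ℕ} (hconst : ∃ c : S, ar c = 0)
    (E F : Set (GTerm S ar × GTerm S ar)) (hEfin : E.Finite) (hFfin : F.Finite)
    (htot : TotalR (RRsys E (STSet (E ∪ F))) (CCl E (STSet (E ∪ F)))) :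
    ∀ p ∈ STSet (E ∪ F),
      ({s | EqCong (E ∪ F) p s} = {s | EqCong E p s}) ↔
      (thCls (E ∪ F) (STSet (E ∪ F)) p = thCls E (STSet (E ∪ F)) p) := by
  intro p hp
  have hsub : E ⊆ E ∪ F := Set.subset_union_left
  constructor
  · intro h
    ext u
    constructor
    · rintro ⟨hu, hc⟩
      exact ⟨hu, (Set.ext_iff.mp h u).mp hc⟩
    · rintro ⟨hu, hc⟩
      exact ⟨hu, hc.mono' hsub⟩
  · intro h
    ext s
    simp only [Set.mem_setOf_eq]
    constructor
    · intro hc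
      obtain ⟨w, hw, hew⟩ := exists_rep E F htot s
      have hwth : w ∈ thCls (E ∪ F) (STSet (E ∪ F)) p :=
        ⟨hw, hc.trans (hew.mono' hsub)⟩
      rw [h] at hwth
      exact hwth.2.trans hew.symm
    · intro hc
      exact hc.mono' hsub
end

section
/- Let E and F be GTESs over a signature Σ, and let a, b ∈ C⟨E∪F,∅⟩. Then R⟨E∪F,∅⟩ reaches the constant a from a proper extension of the constant b if and only if there is a path of positive length or a cycle from a to b in the auxiliary directed graph AUX[E;F], i.e. if and only if (a,b) lies in the transitive closure of the relation A[E;F]. -/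
/-!
Constants are normal forms of `R⟨G⟩` and every rule has the shape `σ(c₁,…,c_m) → c`, so a
derivation `δ[b] →* a` evaluates the context `δ` bottom-up: each layer of `δ` is consumed by one
rule whose argument at the hole is the constant reached from the layer below, i.e. by one arc of
the auxiliary graph. Conversely, an arc `a → c` comes from a rule `σ(t₁/Θ,…,t_m/Θ) → σ(t₁,…,t_m)/Θ`
with `σ(t₁,…,t_m) ∈ W`; putting the hole at position `i` and the ground terms `t_j` elsewhere gives
a layer that rewrites `c` to `a`, because, `W` being closed under subterms, each `t_j` rewrites to
its own class. Stacking these layers along a path yields the proper extension.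
-/

open Relation

variable {S : Type} {ar : S → ℕ}

def IsSubtermClosed (W : Set (GTerm S ar)) : Prop :=
  ∀ ⦃s t : GTerm S ar⦄, Subterm s t → t ∈ W → s ∈ W

theorem Subterm.trans {s t u : GTerm S ar} (hst : Subterm s t) (htu : Subterm t u) :
    Subterm s u := by
  induction htu with
  | refl => exact hst
  | node i _ ih => exact Subterm.node i ih

theorem isSubtermClosed_STSet (G : Set (GTerm S ar × GTerm S ar)) :
    IsSubtermClosed (STSet G) := by
  rintro s t hst ⟨p, hp, h⟩
  exact ⟨p, hp, h.imp hst.trans hst.trans⟩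

section Congruence

variable {C : Type} {R : Set (XRule S ar C)} {σ : S}

theorem rewStar_node_update (f : Fin (ar σ) → XTerm S ar C) (i : Fin (ar σ))
    {s t : XTerm S ar C} (h : RewStar R s t) :
    RewStar R (XTerm.node σ (Function.update f i s)) (XTerm.node σ (Function.update f i t)) := by
  refine ReflTransGen.lift (fun x => XTerm.node σ (Function.update f i x)) (fun u v huv => ?_) _ _ h
  refine Rew.node i (by simpa using huv) fun j hj => ?_
  simp [Function.update_of_ne hj]

theorem rewStar_node {f g : Fin (ar σ) → XTerm S ar C} (h : ∀ j, RewStar R (f j) (g j)) :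
    RewStar R (XTerm.node σ f) (XTerm.node σ g) := by
  classical
  suffices key : ∀ s : Finset (Fin (ar σ)),
      RewStar R (XTerm.node σ f) (XTerm.node σ fun j => if j ∈ s then g j else f j) by
    simpa using key Finset.univ
  intro s
  induction s using Finset.induction_on with
  | empty =>
    simp only [Finset.notMem_empty, if_false]
    exact ReflTransGen.refl
  | insert i s hi ih =>
    set F := fun j => if j ∈ s then g j else f j
    have hFi : F i = f i := if_neg hi
    have hupdate : Function.update F i (g i) = fun j => if j ∈ insert i s then g j else f j := by
      funext j
      by_cases hji : j = i <;> simp [F, hji]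
    have step := rewStar_node_update F i (h i)
    rw [hFi.symm, Function.update_eq_self, hupdate] at step
    exact ih.trans step

end Congruence

section Rules

variable {G : Set (GTerm S ar × GTerm S ar)} {W : Set (GTerm S ar)}

theorem rewStar_RRsys_const {c : Set (GTerm S ar)} {v : XTerm S ar (Set (GTerm S ar))}
    (h : RewStar (RRsys G W) (XTerm.const c) v) : v = XTerm.const c := by
  rcases h.cases_head with h | ⟨_, ⟨⟨σ, ts, -, hrule⟩⟩, -⟩
  · exact h.symm
  · cases congrArg Prod.fst hrule

/-- A derivation `σ(f₁,…,f_m) →* a` ends with a rule application at the root. -/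
theorem exists_rule_of_rewStar_node {a : Set (GTerm S ar)} {u : XTerm S ar (Set (GTerm S ar))}
    (h : RewStar (RRsys G W) u (XTerm.const a)) {σ : S}
    {f : Fin (ar σ) → XTerm S ar (Set (GTerm S ar))} (hu : u = XTerm.node σ f) :
    ∃ av : Fin (ar σ) → Set (GTerm S ar),
      (∀ j, RewStar (RRsys G W) (f j) (XTerm.const (av j))) ∧
      (XTerm.node σ (fun j => XTerm.const (av j)), XTerm.const a) ∈ RRsys G W := by
  induction h using ReflTransGen.head_induction_on generalizing f with
  | refl => cases hu
  | head hstep hrest ih =>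
    subst hu
    cases hstep with
    | rule hrule =>
      obtain ⟨σ', ts, hts, hrule⟩ := hrule
      simp only [Prod.mk.injEq, XTerm.node.injEq] at hrule
      obtain ⟨⟨rfl, hf⟩, rfl⟩ := hrule
      cases rewStar_RRsys_const hrest
      exact ⟨fun j => thCls G W (ts j), fun j => by rw [eq_of_heq hf]; exact ReflTransGen.refl,
        ⟨σ, ts, hts, rfl⟩⟩
    | node i hi hother =>
      obtain ⟨av, hargs, hrule⟩ := ih rfl
      refine ⟨av, fun j => ?_, hrule⟩
      by_cases hji : j = i
      · subst hji
        exact (hargs j).head hi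
      · rw [hother j hji]
        exact hargs j

theorem ProperExt.transGen_auxArc {b : Set (GTerm S ar)} {t : XTerm S ar (Set (GTerm S ar))}
    (ht : ProperExt (XTerm.const b) t) {a : Set (GTerm S ar)}
    (h : RewStar (RRsys G W) t (XTerm.const a)) : TransGen (AuxArc (RRsys G W)) a b := by
  induction ht generalizing a with
  | base i hfi _ =>
    obtain ⟨av, hargs, hrule⟩ := exists_rule_of_rewStar_node h rfl
    have hb : XTerm.const (av i) = XTerm.const b := rewStar_RRsys_const (hfi ▸ hargs i)
    cases hb
    exact TransGen.single ⟨_, av, i, hrule, rfl⟩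
  | step i _ _ ih =>
    obtain ⟨av, hargs, hrule⟩ := exists_rule_of_rewStar_node h rfl
    exact TransGen.head ⟨_, av, i, hrule, rfl⟩ (ih (hargs i))

theorem rewStar_toX_thCls (hW : IsSubtermClosed W) {s : GTerm S ar} (hs : s ∈ W) :
    RewStar (RRsys G W) s.toX (XTerm.const (thCls G W s)) := by
  induction s with
  | node σ ts ih =>
    have hargs : ∀ i, RewStar (RRsys G W) (ts i).toX (XTerm.const (thCls G W (ts i))) :=
      fun i => ih i (hW (Subterm.node i (Subterm.refl _)) hs)
    exact (rewStar_node hargs).tail (Rew.rule ⟨σ, ts, hs, rfl⟩)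

theorem AuxArc.exists_layer (hW : IsSubtermClosed W) {a c : Set (GTerm S ar)}
    (h : AuxArc (RRsys G W) a c) :
    ∃ (σ : S) (f : Fin (ar σ) → XTerm S ar (Set (GTerm S ar))) (i : Fin (ar σ)),
      (∀ j, j ≠ i → IsGroundX (f j)) ∧
      ∀ t, RewStar (RRsys G W) t (XTerm.const c) →
        RewStar (RRsys G W) (XTerm.node σ (Function.update f i t)) (XTerm.const a) := by
  obtain ⟨σ, av, i, ⟨σ', ts, hts, hrule⟩, rfl⟩ := h
  simp only [Prod.mk.injEq, XTerm.node.injEq, XTerm.const.injEq] at hrule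
  obtain ⟨⟨rfl, hav⟩, rfl⟩ := hrule
  have hav : ∀ j, av j = thCls G W (ts j) := fun j =>
    XTerm.const.inj (congrFun (eq_of_heq hav) j)
  refine ⟨σ, fun j => (ts j).toX, i, fun j _ => ⟨ts j, rfl⟩, fun t ht => ?_⟩
  refine (rewStar_node fun j => ?_).tail (Rew.rule ⟨σ, ts, hts, rfl⟩)
  by_cases hji : j = i
  · subst hji
    simpa [hav] using ht
  · simpa [Function.update_of_ne hji] using
      rewStar_toX_thCls hW (hW (Subterm.node j (Subterm.refl _)) hts)

theorem reachesPE_of_transGen_auxArc (hW : IsSubtermClosed W) {a b : Set (GTerm S ar)}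
    (h : TransGen (AuxArc (RRsys G W)) a b) : ReachesPE (RRsys G W) a b := by
  induction h using TransGen.head_induction_on with
  | single harc =>
    obtain ⟨σ, f, i, hground, hlayer⟩ := harc.exists_layer hW
    refine ⟨_, ProperExt.base i (by simp) fun j hj => ?_, hlayer _ ReflTransGen.refl⟩
    simpa [Function.update_of_ne hj] using hground j hj
  | head harc _ ih =>
    obtain ⟨t, ht, hrew⟩ := ih
    obtain ⟨σ, f, i, hground, hlayer⟩ := harc.exists_layer hW
    refine ⟨_, ProperExt.step i (by simpa using ht) fun j hj => ?_, hlayer t hrew⟩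
    simpa [Function.update_of_ne hj] using hground j hj

theorem reachesPE_iff_transGen_auxArc (hW : IsSubtermClosed W) {a b : Set (GTerm S ar)} :
    ReachesPE (RRsys G W) a b ↔ TransGen (AuxArc (RRsys G W)) a b :=
  ⟨fun ⟨_, ht, hrew⟩ => ht.transGen_auxArc hrew, reachesPE_of_transGen_auxArc hW⟩

end Rules

theorem stmt_13_general {S : Type} {ar : S → ℕ}
    (E F : Set (GTerm S ar × GTerm S ar))
    (a b : Set (GTerm S ar)) :
    ReachesPE (RRsys (E ∪ F) (STSet (E ∪ F))) a b ↔
    Relation.TransGen (AuxArc (RRsys (E ∪ F) (STSet (E ∪ F)))) a b :=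
  reachesPE_iff_transGen_auxArc (isSubtermClosed_STSet _)

theorem stmt_13 {S : Type} [Fintype S] {ar : S → ℕ} (hconst : ∃ c : S, ar c = 0)
    (E F : Set (GTerm S ar × GTerm S ar)) (hEfin : E.Finite) (hFfin : F.Finite)
    (a b : Set (GTerm S ar))
    (ha : a ∈ CCl (E ∪ F) (STSet (E ∪ F))) (hb : b ∈ CCl (E ∪ F) (STSet (E ∪ F))) :
    ReachesPE (RRsys (E ∪ F) (STSet (E ∪ F))) a b ↔
    Relation.TransGen (AuxArc (RRsys (E ∪ F) (STSet (E ∪ F)))) a b :=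
  stmt_13_general E F a b
end
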